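/- Let Q' be the quiver with vertices 1,2,3,4 and arrows 2→3, 3→1, 4→3, and two arrows 1→4. Then every representation of Q' over a field with dimension vector (1,2,1,1) (i.e., with vector spaces of dimensions 1,2,1,1 at vertices 1,2,3,4 respectively) is decomposable, i.e., it is a direct sum of two nonzero subrepresentations. In particular, (1,2,1,1) is not the dimension vector of any indecomposable representation of Q'. -/
import Mathlib


/-!
STATEMENT 6.

Let `Q'` be the quiver with vertices `1,2,3,4` and arrows `2→3`, `3→1`, `4→3`,
and two arrows `1→4`.  A representation of `Q'` over a field `F` assigns an
`F`-vector space `Vᵢ` to each vertex `i` and an `F`-linear map to each arrow: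
here `a : V₂ →ₗ V₃`, `b : V₃ →ₗ V₁`, `c : V₄ →ₗ V₃` and `d, e : V₁ →ₗ V₄`.

We claim: every representation with dimension vector `(1,2,1,1)` is
decomposable, i.e. it is the (internal) direct sum of two nonzero
subrepresentations.  A subrepresentation is a family of submodules, one at
each vertex, stable under the maps attached to the arrows; an internal direct
sum decomposition is a pair of subrepresentations which are complementary
(`IsCompl`) at each vertex, both of them nonzero.
-/
theorem every_rep_of_dim_1211_is_decomposable
    (F : Type*) [Field F]
    (V₁ V₂ V₃ V₄ : Type*)
    [AddCommGroup V₁] [AddCommGroup V₂] [AddCommGroup V₃] [AddCommGroup V₄]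
    [Module F V₁] [Module F V₂] [Module F V₃] [Module F V₄]
    (a : V₂ →ₗ[F] V₃) (b : V₃ →ₗ[F] V₁) (c : V₄ →ₗ[F] V₃)
    (d e : V₁ →ₗ[F] V₄)
    (h1 : Module.finrank F V₁ = 1) (h2 : Module.finrank F V₂ = 2)
    (h3 : Module.finrank F V₃ = 1) (h4 : Module.finrank F V₄ = 1) :
    ∃ (W₁ U₁ : Submodule F V₁) (W₂ U₂ : Submodule F V₂)
      (W₃ U₃ : Submodule F V₃) (W₄ U₄ : Submodule F V₄),
      -- `W` is a subrepresentation
      (∀ x ∈ W₂, a x ∈ W₃) ∧ (∀ x ∈ W₃, b x ∈ W₁) ∧ (∀ x ∈ W₄, c x ∈ W₃) ∧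
      (∀ x ∈ W₁, d x ∈ W₄) ∧ (∀ x ∈ W₁, e x ∈ W₄) ∧
      -- `U` is a subrepresentation
      (∀ x ∈ U₂, a x ∈ U₃) ∧ (∀ x ∈ U₃, b x ∈ U₁) ∧ (∀ x ∈ U₄, c x ∈ U₃) ∧
      (∀ x ∈ U₁, d x ∈ U₄) ∧ (∀ x ∈ U₁, e x ∈ U₄) ∧
      -- the representation is the internal direct sum of `W` and `U`
      IsCompl W₁ U₁ ∧ IsCompl W₂ U₂ ∧ IsCompl W₃ U₃ ∧ IsCompl W₄ U₄ ∧
      -- both subrepresentations are nonzero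
      (W₁ ≠ ⊥ ∨ W₂ ≠ ⊥ ∨ W₃ ≠ ⊥ ∨ W₄ ≠ ⊥) ∧
      (U₁ ≠ ⊥ ∨ U₂ ≠ ⊥ ∨ U₃ ≠ ⊥ ∨ U₄ ≠ ⊥) := by

  have hfd2 : FiniteDimensional F V₂ := Module.finite_of_finrank_pos (by omega)
  have hfd3 : FiniteDimensional F V₃ := Module.finite_of_finrank_pos (by omega)
  have hker : LinearMap.ker a ≠ ⊥ := by
    intro h
    have hrn := LinearMap.finrank_range_add_finrank_ker a
    have hle : Module.finrank F (LinearMap.range a) ≤ 1 := h3 ▸ Submodule.finrank_le _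
    rw [h, finrank_bot] at hrn
    omega
  obtain ⟨U₂, hU₂⟩ := Submodule.exists_isCompl (LinearMap.ker a)
  have hV1 : Nontrivial V₁ := by
    apply Module.nontrivial_of_finrank_pos (R := F); omega
  refine ⟨⊥, ⊤, LinearMap.ker a, U₂, ⊥, ⊤, ⊥, ⊤,
    fun x hx => by simpa using hx,
    fun x hx => by simp at hx; simp [hx],
    fun x hx => by simp at hx; simp [hx],
    fun x hx => by simp at hx; simp [hx],
    fun x hx => by simp at hx; simp [hx],
    fun x _ => trivial, fun x _ => trivial, fun x _ => trivial,
    fun x _ => trivial, fun x _ => trivial,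
    isCompl_bot_top, hU₂, isCompl_bot_top, isCompl_bot_top,
    Or.inr (Or.inl hker),
    Or.inl ?_⟩
  simp
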